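/- Any convex combination of the measures AVaR_{i/n}, i = 0,...,n−1, on the uniform discrete n-point space, ρ(X) = ∑_{i=0}^{n−1} μᵢ AVaR_{i/n}(X) with μᵢ ≥ 0 and ∑μᵢ = 1, is a coherent, law invariant (permutation invariant), and comonotone additive risk measure. -/

import Mathlib

/-!
`AVaR_{i/n}(X)` is `1 / (n - i)` times the sum of the `n - i` largest components of `X`, which
is the largest sum of `X` over an `(n - i)`-element set of indices; a maximum of linear
functionals is monotone and subadditive. Sorting commutes with increasing maps of the values
and ignores permutations of the indices, which gives homogeneity, translation invariance and
law invariance. Comonotone vectors are sorted by a common permutation, so their sorted sum is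
the sum of the sorted vectors. All of these properties survive convex combinations.
-/

open Finset MeasureTheory
open scoped Classical

noncomputable section

/-- Components of `X` sorted in increasing order. -/
def osort {n : ℕ} (X : Fin n → ℝ) : Fin n → ℝ := X ∘ Tuple.sort X

/-- Sum of the `k` smallest components of `X`. -/
def psum {n : ℕ} (X : Fin n → ℝ) (k : ℕ) : ℝ :=
  ∑ j : Fin n, if (j : ℕ) < k then osort X j else 0

/-- `AVaR_{i/n}(X) = (x_[i+1] + ... + x_[n]) / (n - i)`. -/
def avar {n : ℕ} (X : Fin n → ℝ) (i : ℕ) : ℝ :=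
  (∑ j : Fin n, if i ≤ (j : ℕ) then osort X j else 0) / ((n : ℝ) - (i : ℝ))

/-- Cumulative distribution function on the uniform `n`-point space. -/
def cdf {n : ℕ} (X : Fin n → ℝ) (t : ℝ) : ℝ :=
  ((univ.filter fun j => X j ≤ t).card : ℝ) / (n : ℝ)

/-- Value-at-Risk (lower `p`-quantile). -/
def var {n : ℕ} (X : Fin n → ℝ) (p : ℝ) : ℝ :=
  sInf {t : ℝ | p ≤ cdf X t}

/-- `AVaR_α(X) = (1/(1-α)) ∫_α^1 VaR_u(X) du`. -/
def avarC {n : ℕ} (X : Fin n → ℝ) (α : ℝ) : ℝ :=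
  (1 / (1 - α)) * ∫ u in α..1, var X u

/-- Maximum component (essential supremum). -/
def vmax {n : ℕ} (X : Fin n → ℝ) : ℝ := sSup (Set.range X)

/-- Comonotonicity of two random vectors. -/
def Comonotone {n : ℕ} (X Y : Fin n → ℝ) : Prop :=
  ∀ j k, 0 ≤ (X j - X k) * (Y j - Y k)

/-- The permutation matrix of `σ`. -/
def permMat {n : ℕ} (σ : Equiv.Perm (Fin n)) : Matrix (Fin n) (Fin n) ℝ :=
  fun i k => if σ i = k then 1 else 0

theorem Finset.sum_le_sum_of_isUpperSet {ι M : Type*} [LinearOrder ι] [AddCommMonoid M]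
    [PartialOrder M] [IsOrderedAddMonoid M] {f : ι → M} (hf : Monotone f) {s t : Finset ι}
    (ht : IsUpperSet (t : Set ι)) (hst : #s = #t) :
    ∑ i ∈ s, f i ≤ ∑ i ∈ t, f i := by
  have hcard : #(s \ t) = #(t \ s) := card_sdiff_comm hst
  have hlt : ∀ a ∈ s \ t, ∀ b ∈ t \ s, a < b := by
    intro a ha b hb
    by_contra! hba
    exact (mem_sdiff.1 ha).2 (ht hba (mem_sdiff.1 hb).1)
  have hdiff : ∑ i ∈ s \ t, f i ≤ ∑ i ∈ t \ s, f i := by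
    rcases (t \ s).eq_empty_or_nonempty with hts | hts
    · rw [hts, card_empty, card_eq_zero] at hcard
      rw [hts, hcard]
    set b := (t \ s).min' hts
    calc ∑ i ∈ s \ t, f i ≤ #(s \ t) • f b :=
          sum_le_card_nsmul _ _ _ fun a ha => hf (hlt a ha b (min'_mem _ hts)).le
      _ = #(t \ s) • f b := by rw [hcard]
      _ ≤ ∑ i ∈ t \ s, f i := card_nsmul_le_sum _ _ _ fun c hc => hf (min'_le _ c hc)
  rw [← sum_inter_add_sum_sdiff s t, ← sum_inter_add_sum_sdiff t s, inter_comm]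
  exact add_le_add le_rfl hdiff

section Sorting

variable {n : ℕ}

theorem osort_eq_comp_of_monotone {X : Fin n → ℝ} {σ : Equiv.Perm (Fin n)}
    (h : Monotone (X ∘ σ)) : osort X = X ∘ σ :=
  (Tuple.comp_sort_eq_comp_iff_monotone.mpr h).symm

theorem osort_comp_of_monotone (X : Fin n → ℝ) {f : ℝ → ℝ} (hf : Monotone f) :
    osort (fun j => f (X j)) = fun j => f (osort X j) :=
  osort_eq_comp_of_monotone (hf.comp (Tuple.monotone_sort X))

theorem osort_comp_perm (X : Fin n → ℝ) (π : Equiv.Perm (Fin n)) : osort (X ∘ π) = osort X :=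
  Tuple.comp_perm_comp_sort_eq_comp_sort

theorem Comonotone.symm {X Y : Fin n → ℝ} (h : Comonotone X Y) : Comonotone Y X :=
  fun j k => by simpa only [mul_comm] using h j k

theorem Comonotone.monotone_comp {X Y : Fin n → ℝ} (h : Comonotone X Y) {σ : Fin n → Fin n}
    (hσ : Monotone fun j => X (σ j) + Y (σ j)) : Monotone (X ∘ σ) := by
  intro a b hab
  by_contra! hX
  have hprod := h (σ b) (σ a)
  have hsum := hσ hab
  simp only [Function.comp_apply] at hX
  -- `X ∘ σ` drops while the sum does not, so `Y ∘ σ` rises, against comonotonicity.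
  nlinarith

theorem osort_add_of_comonotone {X Y : Fin n → ℝ} (h : Comonotone X Y) :
    osort (fun j => X j + Y j) = fun j => osort X j + osort Y j := by
  set σ := Tuple.sort fun j => X j + Y j
  have hXY : Monotone fun j => X (σ j) + Y (σ j) := Tuple.monotone_sort fun j => X j + Y j
  have hYX : Monotone fun j => Y (σ j) + X (σ j) := by simpa only [add_comm] using hXY
  rw [osort_eq_comp_of_monotone (h.monotone_comp hXY),
    osort_eq_comp_of_monotone (h.symm.monotone_comp hYX)]
  rfl

end Sorting

section TailSum

variable {n : ℕ}

def tailIndices (n i : ℕ) : Finset (Fin n) := {j | i ≤ (j : ℕ)}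

theorem card_tailIndices (n i : ℕ) : #(tailIndices n i) = n - i := by
  have h := card_filter_add_card_filter_not (s := univ) fun j : Fin n => (j : ℕ) < i
  simp only [Fin.card_filter_val_lt, not_lt, card_univ, Fintype.card_fin] at h
  rw [tailIndices]
  omega

theorem isUpperSet_tailIndices (n i : ℕ) : IsUpperSet (tailIndices n i : Set (Fin n)) := by
  intro a b hab ha
  simp only [tailIndices, coe_filter, mem_univ, true_and] at ha ⊢
  exact le_trans (α := ℕ) ha hab

def tailSum (X : Fin n → ℝ) (i : ℕ) : ℝ := ∑ j ∈ tailIndices n i, osort X j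

theorem avar_eq_tailSum_div (X : Fin n → ℝ) (i : ℕ) :
    avar X i = tailSum X i / ((n : ℝ) - i) := by
  rw [avar, tailSum, tailIndices, sum_filter]

theorem isGreatest_tailSum (X : Fin n → ℝ) (i : ℕ) :
    IsGreatest ((fun T => ∑ j ∈ T, X j) '' {T | #T = n - i}) (tailSum X i) := by
  set σ := Tuple.sort X
  refine ⟨⟨(tailIndices n i).map σ.toEmbedding, by simp [card_tailIndices], ?_⟩, ?_⟩
  · exact sum_map _ _ _
  rintro _ ⟨T, hT, rfl⟩
  calc ∑ j ∈ T, X j = ∑ j ∈ T.map σ.symm.toEmbedding, osort X j := by simp [osort, σ]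
    _ ≤ tailSum X i :=
      sum_le_sum_of_isUpperSet (Tuple.monotone_sort X) (isUpperSet_tailIndices n i)
        (by simpa [card_tailIndices] using hT)

theorem tailSum_mono {X Y : Fin n → ℝ} (h : ∀ j, X j ≤ Y j) (i : ℕ) :
    tailSum X i ≤ tailSum Y i := by
  obtain ⟨T, hT, hX : ∑ j ∈ T, X j = tailSum X i⟩ := (isGreatest_tailSum X i).1
  rw [← hX]
  exact (sum_le_sum fun j _ => h j).trans ((isGreatest_tailSum Y i).2 ⟨T, hT, rfl⟩)

theorem tailSum_add_le (X Y : Fin n → ℝ) (i : ℕ) :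
    tailSum (fun j => X j + Y j) i ≤ tailSum X i + tailSum Y i := by
  obtain ⟨T, hT, hXY : ∑ j ∈ T, (X j + Y j) = tailSum (fun j => X j + Y j) i⟩ :=
    (isGreatest_tailSum (fun j => X j + Y j) i).1
  rw [← hXY, sum_add_distrib]
  exact add_le_add ((isGreatest_tailSum X i).2 ⟨T, hT, rfl⟩)
    ((isGreatest_tailSum Y i).2 ⟨T, hT, rfl⟩)

theorem tailSum_const_mul (X : Fin n → ℝ) {l : ℝ} (hl : 0 ≤ l) (i : ℕ) :
    tailSum (fun j => l * X j) i = l * tailSum X i := by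
  rw [tailSum, tailSum, osort_comp_of_monotone X (monotone_mul_left_of_nonneg hl), mul_sum]

theorem tailSum_add_const (X : Fin n → ℝ) (c : ℝ) {i : ℕ} (hi : i ≤ n) :
    tailSum (fun j => X j + c) i = tailSum X i + ((n : ℝ) - i) * c := by
  rw [tailSum, tailSum, osort_comp_of_monotone X add_left_mono, sum_add_distrib,
    sum_const, card_tailIndices, nsmul_eq_mul, Nat.cast_sub hi]

theorem tailSum_add_of_comonotone {X Y : Fin n → ℝ} (h : Comonotone X Y) (i : ℕ) :
    tailSum (fun j => X j + Y j) i = tailSum X i + tailSum Y i := by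
  rw [tailSum, tailSum, tailSum, osort_add_of_comonotone h, sum_add_distrib]

end TailSum

section AVaR

variable {n : ℕ}

theorem avar_mono {X Y : Fin n → ℝ} (h : ∀ j, X j ≤ Y j) {i : ℕ} (hi : i ≤ n) :
    avar X i ≤ avar Y i := by
  rw [avar_eq_tailSum_div, avar_eq_tailSum_div]
  exact div_le_div_of_nonneg_right (tailSum_mono h i) (sub_nonneg.2 (Nat.cast_le.2 hi))

theorem avar_const_mul (X : Fin n → ℝ) {l : ℝ} (hl : 0 ≤ l) (i : ℕ) :
    avar (fun j => l * X j) i = l * avar X i := by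
  rw [avar_eq_tailSum_div, avar_eq_tailSum_div, tailSum_const_mul X hl, mul_div_assoc]

theorem avar_add_le (X Y : Fin n → ℝ) {i : ℕ} (hi : i ≤ n) :
    avar (fun j => X j + Y j) i ≤ avar X i + avar Y i := by
  rw [avar_eq_tailSum_div, avar_eq_tailSum_div, avar_eq_tailSum_div, ← add_div]
  exact div_le_div_of_nonneg_right (tailSum_add_le X Y i) (sub_nonneg.2 (Nat.cast_le.2 hi))

theorem avar_add_const (X : Fin n → ℝ) (c : ℝ) {i : ℕ} (hi : i < n) :
    avar (fun j => X j + c) i = avar X i + c := by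
  have hpos : (0 : ℝ) < (n : ℝ) - i := sub_pos.2 (Nat.cast_lt.2 hi)
  rw [avar_eq_tailSum_div, avar_eq_tailSum_div, tailSum_add_const X c hi.le, add_div,
    mul_div_cancel_left₀ c hpos.ne']

theorem avar_comp_perm (X : Fin n → ℝ) (π : Equiv.Perm (Fin n)) (i : ℕ) :
    avar (X ∘ π) i = avar X i := by
  rw [avar, avar, osort_comp_perm]

theorem avar_add_of_comonotone {X Y : Fin n → ℝ} (h : Comonotone X Y) (i : ℕ) :
    avar (fun j => X j + Y j) i = avar X i + avar Y i := by
  rw [avar_eq_tailSum_div, avar_eq_tailSum_div, avar_eq_tailSum_div,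
    tailSum_add_of_comonotone h, add_div]

end AVaR

theorem convex_combination_avar_coherent_general {n : ℕ}
    (μ : Fin n → ℝ) (hμ0 : ∀ i, 0 ≤ μ i) (hμ1 : ∑ i, μ i = 1) :
    (∀ X Y : Fin n → ℝ, (∀ j, X j ≤ Y j) →
      (∑ i : Fin n, μ i * avar X i) ≤ ∑ i : Fin n, μ i * avar Y i) ∧
    (∀ (X : Fin n → ℝ) (l : ℝ), 0 < l →
      (∑ i : Fin n, μ i * avar (fun j => l * X j) i) = l * ∑ i : Fin n, μ i * avar X i) ∧
    (∀ X Y : Fin n → ℝ,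
      (∑ i : Fin n, μ i * avar (fun j => X j + Y j) i) ≤
        (∑ i : Fin n, μ i * avar X i) + ∑ i : Fin n, μ i * avar Y i) ∧
    (∀ (X : Fin n → ℝ) (c : ℝ),
      (∑ i : Fin n, μ i * avar (fun j => X j + c) i) = (∑ i : Fin n, μ i * avar X i) + c) ∧
    (∀ (X : Fin n → ℝ) (π : Equiv.Perm (Fin n)),
      (∑ i : Fin n, μ i * avar (X ∘ π) i) = ∑ i : Fin n, μ i * avar X i) ∧
    (∀ X Y : Fin n → ℝ, Comonotone X Y →
      (∑ i : Fin n, μ i * avar (fun j => X j + Y j) i) =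
        (∑ i : Fin n, μ i * avar X i) + ∑ i : Fin n, μ i * avar Y i) := by
  refine ⟨fun X Y h => ?_, fun X l hl => ?_, fun X Y => ?_, fun X c => ?_, fun X π => ?_,
    fun X Y h => ?_⟩
  · exact sum_le_sum fun i _ => mul_le_mul_of_nonneg_left (avar_mono h i.isLt.le) (hμ0 i)
  · simp_rw [avar_const_mul X hl.le, mul_left_comm (μ _), ← mul_sum]
  · rw [← sum_add_distrib]
    exact sum_le_sum fun i _ =>
      (mul_le_mul_of_nonneg_left (avar_add_le X Y i.isLt.le) (hμ0 i)).trans_eq (mul_add _ _ _)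
  · simp_rw [fun i : Fin n => avar_add_const X c i.isLt, mul_add, sum_add_distrib, ← sum_mul,
      hμ1, one_mul]
  · simp_rw [avar_comp_perm]
  · simp_rw [avar_add_of_comonotone h, mul_add, sum_add_distrib]

/-- any convex combination of `AVaR_{i/n}`, `i = 0,...,n-1`, is a
coherent, permutation invariant, comonotone additive risk measure. -/
theorem convex_combination_avar_coherent {n : ℕ} (hn : 0 < n)
    (μ : Fin n → ℝ) (hμ0 : ∀ i, 0 ≤ μ i) (hμ1 : ∑ i, μ i = 1) :
    (∀ X Y : Fin n → ℝ, (∀ j, X j ≤ Y j) →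
      (∑ i : Fin n, μ i * avar X i) ≤ ∑ i : Fin n, μ i * avar Y i) ∧
    (∀ (X : Fin n → ℝ) (l : ℝ), 0 < l →
      (∑ i : Fin n, μ i * avar (fun j => l * X j) i) = l * ∑ i : Fin n, μ i * avar X i) ∧
    (∀ X Y : Fin n → ℝ,
      (∑ i : Fin n, μ i * avar (fun j => X j + Y j) i) ≤
        (∑ i : Fin n, μ i * avar X i) + ∑ i : Fin n, μ i * avar Y i) ∧
    (∀ (X : Fin n → ℝ) (c : ℝ),
      (∑ i : Fin n, μ i * avar (fun j => X j + c) i) = (∑ i : Fin n, μ i * avar X i) + c) ∧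
    (∀ (X : Fin n → ℝ) (π : Equiv.Perm (Fin n)),
      (∑ i : Fin n, μ i * avar (X ∘ π) i) = ∑ i : Fin n, μ i * avar X i) ∧
    (∀ X Y : Fin n → ℝ, Comonotone X Y →
      (∑ i : Fin n, μ i * avar (fun j => X j + Y j) i) =
        (∑ i : Fin n, μ i * avar X i) + ∑ i : Fin n, μ i * avar Y i) :=
  convex_combination_avar_coherent_general μ hμ0 hμ1

end
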